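/- arXiv:math/9611223 — 5 statements merged into one kernel-verified Lean document; each statement's English description precedes it below -/
import Mathlib

section
/- Let Γ be the Christoffel symbol of a linear connection on the trivial bundle with fibre V over E, let f : F → E be smooth, let s : F → V be a smooth section along f, and let X, Y be smooth vector fields on F. Then ∇_X ∇_Y s − ∇_Y ∇_X s − ∇_{[X,Y]} s = R_{f(x)}(Df(x)(X(x)), Df(x)(Y(x)))(s(x)) for all x ∈ F, where R is the curvature of Γ. -/
lemma aux_cov_deriv {E V F : Type*} [NormedAddCommGroup E] [NormedSpace ℝ E]
    [NormedAddCommGroup V] [NormedSpace ℝ V]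
    [NormedAddCommGroup F] [NormedSpace ℝ F]
    (Γ : E → V →L[ℝ] E →L[ℝ] V) (hΓ : ContDiff ℝ (⊤ : ℕ∞) Γ)
    (f : F → E) (hf : ContDiff ℝ (⊤ : ℕ∞) f)
    (s : F → V) (hs : ContDiff ℝ (⊤ : ℕ∞) s)
    (Y : F → F) (hY : ContDiff ℝ (⊤ : ℕ∞) Y) (x a : F) :
    fderiv ℝ (fun z => fderiv ℝ s z (Y z) - Γ (f z) (s z) (fderiv ℝ f z (Y z))) x a
    = fderiv ℝ (fderiv ℝ s) x a (Y x) + fderiv ℝ s x (fderiv ℝ Y x a)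
      - (fderiv ℝ Γ (f x) (fderiv ℝ f x a) (s x) (fderiv ℝ f x (Y x))
         + Γ (f x) (fderiv ℝ s x a) (fderiv ℝ f x (Y x))
         + (Γ (f x) (s x) (fderiv ℝ (fderiv ℝ f) x a (Y x))
            + Γ (f x) (s x) (fderiv ℝ f x (fderiv ℝ Y x a)))) := by
  have hds : Differentiable ℝ (fderiv ℝ s) :=
    (hs.fderiv_right (m := (⊤ : ℕ∞)) (by simp)).differentiable (by simp)
  have hdf : Differentiable ℝ (fderiv ℝ f) :=
    (hf.fderiv_right (m := (⊤ : ℕ∞)) (by simp)).differentiable (by simp)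
  have hA : Differentiable ℝ (fun z => fderiv ℝ s z (Y z)) :=
    hds.clm_apply (hY.differentiable (by simp))
  have hΓf : Differentiable ℝ (fun z => Γ (f z)) :=
    ((hΓ.comp hf).differentiable (by simp))
  have hG : Differentiable ℝ (fun z => Γ (f z) (s z)) :=
    hΓf.clm_apply (hs.differentiable (by simp))
  have hw : Differentiable ℝ (fun z => fderiv ℝ f z (Y z)) :=
    hdf.clm_apply (hY.differentiable (by simp))
  have hB : Differentiable ℝ (fun z => Γ (f z) (s z) (fderiv ℝ f z (Y z))) :=
    hG.clm_apply hw
  rw [fderiv_fun_sub (hA x) (hB x)]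
  rw [fderiv_clm_apply (hds x) ((hY.differentiable (by simp)) x)]
  rw [fderiv_clm_apply (hG x) (hw x)]
  rw [fderiv_clm_apply (hΓf x) ((hs.differentiable (by simp)) x)]
  rw [fderiv_clm_apply (hdf x) ((hY.differentiable (by simp)) x)]
  have hcomp : fderiv ℝ (fun z => Γ (f z)) x =
      (fderiv ℝ Γ (f x)).comp (fderiv ℝ f x) :=
    fderiv_comp x ((hΓ.differentiable (by simp)) (f x)) ((hf.differentiable (by simp)) x)
  rw [hcomp]
  simp only [ContinuousLinearMap.sub_apply, ContinuousLinearMap.add_apply,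
    ContinuousLinearMap.comp_apply, ContinuousLinearMap.flip_apply, map_add]
  abel

/-- For a linear connection with Christoffel symbol `Γ` on the trivial bundle
with fibre `V` over `E`, a smooth `f : F → E`, a smooth section `s : F → V` along `f`,
and smooth vector fields `X Y` on `F`:
`∇_X ∇_Y s − ∇_Y ∇_X s − ∇_{[X,Y]} s = R_{f x}(Df x (X x), Df x (Y x))(s x)`. -/
theorem stmt_2 {E V F : Type*} [NormedAddCommGroup E] [NormedSpace ℝ E]
    [NormedAddCommGroup V] [NormedSpace ℝ V]
    [NormedAddCommGroup F] [NormedSpace ℝ F]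
    (Γ : E → V →L[ℝ] E →L[ℝ] V) (hΓ : ContDiff ℝ (⊤ : ℕ∞) Γ)
    (f : F → E) (hf : ContDiff ℝ (⊤ : ℕ∞) f)
    (s : F → V) (hs : ContDiff ℝ (⊤ : ℕ∞) s)
    (X Y : F → F) (hX : ContDiff ℝ (⊤ : ℕ∞) X) (hY : ContDiff ℝ (⊤ : ℕ∞) Y)
    (cov : (F → F) → (F → V) → (F → V))
    (hcov : cov = fun Z σ x => fderiv ℝ σ x (Z x) - Γ (f x) (σ x) (fderiv ℝ f x (Z x)))
    (R : E → E → E → V → V)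
    (hR : R = fun y ξ η v => fderiv ℝ Γ y η v ξ - fderiv ℝ Γ y ξ v η
      + Γ y (Γ y v η) ξ - Γ y (Γ y v ξ) η)
    (x : F) :
    cov X (cov Y s) x - cov Y (cov X s) x
      - cov (fun z => fderiv ℝ Y z (X z) - fderiv ℝ X z (Y z)) s x
      = R (f x) (fderiv ℝ f x (X x)) (fderiv ℝ f x (Y x)) (s x) := by
  subst hcov hR
  simp only []
  rw [aux_cov_deriv Γ hΓ f hf s hs Y hY x (X x),
      aux_cov_deriv Γ hΓ f hf s hs X hX x (Y x)]
  have hss : fderiv ℝ (fderiv ℝ s) x (X x) (Y x) = fderiv ℝ (fderiv ℝ s) x (Y x) (X x) :=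
    (hs.contDiffAt.isSymmSndFDerivAt (by rw [minSmoothness_of_isRCLikeNormedField]; exact WithTop.coe_le_coe.mpr le_top)) (X x) (Y x)
  have hff : fderiv ℝ (fderiv ℝ f) x (X x) (Y x) = fderiv ℝ (fderiv ℝ f) x (Y x) (X x) :=
    (hf.contDiffAt.isSymmSndFDerivAt (by rw [minSmoothness_of_isRCLikeNormedField]; exact WithTop.coe_le_coe.mpr le_top)) (X x) (Y x)
  simp only [map_sub, ContinuousLinearMap.sub_apply, hss, hff]
  abel
end

section
/- Let Γ be the Christoffel symbol of a linear connection on the trivial bundle with fibre V over E, with connector K(y, v, ξ, w) = (y, w − Γ_y(v, ξ)), let f : F → E and s : F → V be smooth, and set s̃ = (f, s) : F → E × V. Let X, Y be smooth vector fields on F. Then for every x ∈ F, ((K ∘ TK ∘ κ) − (K ∘ TK)) (TTs̃ (TX(Y(x)))) = vertical lift at the point s̃(x) of the vector R_{f(x)}(Df(x)(X(x)), Df(x)(Y(x)))(s(x)); here TX(Y(x)) = (x, X(x), Y(x), DX(x)(Y(x))) ∈ F⁴, TTs̃(x, u₁, u₂, u₃) = (s̃(x), Ds̃(x)(u₁),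 Ds̃(x)(u₂), D²s̃(x)(u₁, u₂) + Ds̃(x)(u₃)) ∈ (E×V)⁴, TK(p, q) = (K(p), DK(p)(q)) for p, q ∈ (E×V)², κ is the flip (a, b, c, d) ↦ (a, c, b, d) on (E×V)⁴, and R is the curvature of Γ. In particular the difference K ∘ TK ∘ κ − K ∘ TK applied to TTs̃ ∘ TX ∘ Y computes the curvature operator. -/
theorem Kderiv {E V : Type*} [NormedAddCommGroup E] [NormedSpace ℝ E]
    [NormedAddCommGroup V] [NormedSpace ℝ V]
    (Γ : E → V →L[ℝ] E →L[ℝ] V) (hΓ : ContDiff ℝ (⊤ : ℕ∞) Γ)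
    (p q : (E × V) × (E × V)) :
    fderiv ℝ (fun p : (E × V) × (E × V) => (p.1.1, p.2.2 - Γ p.1.1 p.1.2 p.2.1)) p q
      = (q.1.1, q.2.2 - fderiv ℝ Γ p.1.1 q.1.1 p.1.2 p.2.1
          - Γ p.1.1 q.1.2 p.2.1 - Γ p.1.1 p.1.2 q.2.1) := by
  set L11 : ((E × V) × (E × V)) →L[ℝ] E :=
    (ContinuousLinearMap.fst ℝ E V).comp (ContinuousLinearMap.fst ℝ (E × V) (E × V)) with hL11
  set L12 : ((E × V) × (E × V)) →L[ℝ] V :=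
    (ContinuousLinearMap.snd ℝ E V).comp (ContinuousLinearMap.fst ℝ (E × V) (E × V)) with hL12
  set L21 : ((E × V) × (E × V)) →L[ℝ] E :=
    (ContinuousLinearMap.fst ℝ E V).comp (ContinuousLinearMap.snd ℝ (E × V) (E × V)) with hL21
  set L22 : ((E × V) × (E × V)) →L[ℝ] V :=
    (ContinuousLinearMap.snd ℝ E V).comp (ContinuousLinearMap.snd ℝ (E × V) (E × V)) with hL22
  have h0 : HasFDerivAt (fun p : (E × V) × (E × V) => Γ p.1.1)
      ((fderiv ℝ Γ p.1.1).comp L11) p :=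
    HasFDerivAt.comp p (hΓ.differentiable (by simp) (L11 p)).hasFDerivAt L11.hasFDerivAt
  have h4 := HasFDerivAt.prodMk L11.hasFDerivAt
    (L22.hasFDerivAt.sub ((h0.clm_apply L12.hasFDerivAt).clm_apply L21.hasFDerivAt))
  simp only [hL11, hL12, hL21, hL22, ContinuousLinearMap.coe_comp',
    ContinuousLinearMap.coe_fst', ContinuousLinearMap.coe_snd', Function.comp] at h4
  rw [HasFDerivAt.fderiv (f := fun p : (E × V) × (E × V) => (p.1.1, p.2.2 - Γ p.1.1 p.1.2 p.2.1)) h4]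
  simp [sub_sub]; abel



/-- For the connector `K` of a linear connection with Christoffel symbol `Γ`
and `s̃ = (f, s)`, the fibrewise difference `(K ∘ TK ∘ κ − K ∘ TK)(TTs̃ (TX (Y x)))`,
attached at the point `s̃ x`, is the vertical lift at `s̃ x` of the curvature value
`R_{f x}(Df x (X x), Df x (Y x))(s x)`. -/
theorem stmt_3 {E V F : Type*} [NormedAddCommGroup E] [NormedSpace ℝ E]
    [NormedAddCommGroup V] [NormedSpace ℝ V]
    [NormedAddCommGroup F] [NormedSpace ℝ F]
    (Γ : E → V →L[ℝ] E →L[ℝ] V) (hΓ : ContDiff ℝ (⊤ : ℕ∞) Γ)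
    (f : F → E) (hf : ContDiff ℝ (⊤ : ℕ∞) f)
    (s : F → V) (hs : ContDiff ℝ (⊤ : ℕ∞) s)
    (st : F → E × V) (hst : st = fun x => (f x, s x))
    (X Y : F → F) (hX : ContDiff ℝ (⊤ : ℕ∞) X) (hY : ContDiff ℝ (⊤ : ℕ∞) Y)
    (K : (E × V) × (E × V) → E × V)
    (hK : K = fun p => (p.1.1, p.2.2 - Γ p.1.1 p.1.2 p.2.1))
    (TK : ((E × V) × (E × V)) × ((E × V) × (E × V)) → (E × V) × (E × V))
    (hTK : TK = fun q => (K q.1, fderiv ℝ K q.1 q.2))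
    (κ : ((E × V) × (E × V)) × ((E × V) × (E × V)) →
         ((E × V) × (E × V)) × ((E × V) × (E × V)))
    (hκ : κ = fun q => ((q.1.1, q.2.1), (q.1.2, q.2.2)))
    (TTst : (F × F) × (F × F) → ((E × V) × (E × V)) × ((E × V) × (E × V)))
    (hTTst : TTst = fun q => ((st q.1.1, fderiv ℝ st q.1.1 q.1.2),
      (fderiv ℝ st q.1.1 q.2.1,
        fderiv ℝ (fderiv ℝ st) q.1.1 q.1.2 q.2.1 + fderiv ℝ st q.1.1 q.2.2)))
    (vlift : E × V → V → (E × V) × (E × V))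
    (hvlift : vlift = fun p u => (p, (0, u)))
    (R : E → E → E → V → V)
    (hR : R = fun y ξ η v => fderiv ℝ Γ y η v ξ - fderiv ℝ Γ y ξ v η
      + Γ y (Γ y v η) ξ - Γ y (Γ y v ξ) η)
    (x : F) :
    (st x,
      K (TK (κ (TTst ((x, X x), (Y x, fderiv ℝ X x (Y x))))))
        - K (TK (TTst ((x, X x), (Y x, fderiv ℝ X x (Y x))))))
      = vlift (st x)
          (R (f x) (fderiv ℝ f x (X x)) (fderiv ℝ f x (Y x)) (s x)) := by
  have hstv : ∀ (z : F) (u : F), fderiv ℝ st z u = (fderiv ℝ f z u, fderiv ℝ s z u) := by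
    intro z u
    rw [hst, (HasFDerivAt.prodMk ((hf.differentiable (by simp) z).hasFDerivAt)
      ((hs.differentiable (by simp) z).hasFDerivAt)).fderiv]
    rfl
  have hstx : st x = (f x, s x) := by rw [hst]
  subst hK hTK hκ hTTst hvlift hR
  simp only [Kderiv Γ hΓ, hstv, hstx, Prod.mk.injEq, Prod.mk_sub_mk, Prod.fst_add,
    Prod.snd_add, map_add, map_sub, ContinuousLinearMap.add_apply,
    ContinuousLinearMap.sub_apply, Prod.mk_add_mk]
  refine ⟨trivial, sub_self _, by abel⟩
end

section
/- Let σ : E × E → E be a smooth spray function with spray vector field S(x, v) = (v, σ(x, v)) on E × E, and let Φ : ℝ × (E × E) → E × E be a smooth global flow of S, i.e. Φ(0, p) = p and ∂_t Φ(t, p) = S(Φ(t, p)) for all t, p. Let X : ℝ → E × E be a smooth curve and define Y(t) := (Φ(t, X(0)), ∂_s|_{s=0} Φ(t, X(s))) ∈ (E × E) × (E × E) ≅ E⁴. Then Y is an integral curve of the Jacobi flow vector field W(x, v, η, ζ) = (v, σ(x, v), ζ, D₁σ(x, v)(η) + D₂σ(x, v)(ζ)); in particular, the first component c(t) of Φ(t,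 X(0)) is a geodesic and J(t) := ∂_s|_{s=0}(first component of Φ(t, X(s))) satisfies the Jacobi equation J'' = D₁σ(c, c')(J) + D₂σ(c, c')(J'). -/
/-- If `Φ` is a smooth global flow of the spray vector field
`S (x,v) = (v, σ (x,v))` and `X : ℝ → E × E` is a smooth curve, then
`Y t = (Φ (t, X 0), ∂_s|₀ Φ (t, X s))` is an integral curve of the Jacobi flow vector
field `W`; in particular the first component `c` of `Φ (·, X 0)` is a geodesic and
`J t = ∂_s|₀ (Φ (t, X s)).1` satisfies the Jacobi equation. -/
theorem stmt_9 {E : Type*} [NormedAddCommGroup E] [NormedSpace ℝ E]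
    (σ : E × E → E) (hσ : ContDiff ℝ (⊤ : ℕ∞) σ)
    (hhom : ∀ (x v : E) (t : ℝ), σ (x, t • v) = t ^ 2 • σ (x, v))
    (Φ : ℝ × (E × E) → E × E) (hΦ : ContDiff ℝ (⊤ : ℕ∞) Φ)
    (hΦ0 : ∀ p, Φ (0, p) = p)
    (hflow : ∀ (t : ℝ) (p : E × E),
      HasDerivAt (fun τ => Φ (τ, p)) ((Φ (t, p)).2, σ (Φ (t, p))) t)
    (X : ℝ → E × E) (hX : ContDiff ℝ (⊤ : ℕ∞) X)
    (Y : ℝ → (E × E) × (E × E))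
    (hY : Y = fun t => (Φ (t, X 0), deriv (fun s => Φ (t, X s)) 0)) :
    (∀ t, HasDerivAt Y
      (((Y t).1.2, σ (Y t).1),
        ((Y t).2.2, fderiv ℝ σ (Y t).1 ((Y t).2.1, 0)
          + fderiv ℝ σ (Y t).1 (0, (Y t).2.2))) t) ∧
    (∀ t, deriv (deriv (fun u => (Φ (u, X 0)).1)) t
        = σ ((Φ (t, X 0)).1, deriv (fun u => (Φ (u, X 0)).1) t)) ∧
    (∀ t, deriv (deriv (fun u => deriv (fun s => (Φ (u, X s)).1) 0)) t
        = fderiv ℝ σ ((Φ (t, X 0)).1, deriv (fun u => (Φ (u, X 0)).1) t)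
            (deriv (fun s => (Φ (t, X s)).1) 0, 0)
          + fderiv ℝ σ ((Φ (t, X 0)).1, deriv (fun u => (Φ (u, X 0)).1) t)
            (0, deriv (fun u => deriv (fun s => (Φ (u, X s)).1) 0) t)) := by
  have hσd : Differentiable ℝ σ := hσ.differentiable (by simp)
  set S : E × E → E × E := fun p => (p.2, σ p) with hSdef
  set G : ℝ × ℝ → E × E := fun p => Φ (p.1, X p.2) with hGdef
  have hGc : ContDiff ℝ (⊤ : ℕ∞) G := hΦ.comp (contDiff_fst.prodMk (hX.comp contDiff_snd))
  have hGd : Differentiable ℝ G := hGc.differentiable (by simp)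
  have hDG : ∀ p, HasFDerivAt G (fderiv ℝ G p) p := fun p => (hGd p).hasFDerivAt
  have hfd : ContDiff ℝ (⊤ : ℕ∞) (fderiv ℝ G) := hGc.fderiv_right (by simp)
  have hfdd : Differentiable ℝ (fderiv ℝ G) := hfd.differentiable (by simp)
  -- partial derivatives
  have hpt : ∀ t s : ℝ, HasDerivAt (fun τ => G (τ, s)) (fderiv ℝ G (t, s) (1, 0)) t := by
    intro t s
    exact (hDG (t, s)).comp_hasDerivAt t (HasDerivAt.prodMk (hasDerivAt_id t) (hasDerivAt_const t s))
  have hps : ∀ t s : ℝ, HasDerivAt (fun u => G (t, u)) (fderiv ℝ G (t, s) (0, 1)) s := by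
    intro t s
    exact (hDG (t, s)).comp_hasDerivAt s (HasDerivAt.prodMk (hasDerivAt_const s t) (hasDerivAt_id s))
  -- flow identity for fderiv
  have hflowG : ∀ t s : ℝ, fderiv ℝ G (t, s) (1, 0) = S (G (t, s)) := by
    intro t s
    exact (hpt t s).unique (hflow t (X s))
  -- B t := deriv (fun s => Φ (t, X s)) 0 = fderiv G (t,0) (0,1)
  have hB : ∀ t : ℝ, deriv (fun s => Φ (t, X s)) 0 = fderiv ℝ G (t, 0) (0, 1) :=
    fun t => (hps t 0).deriv
  -- symmetry of second derivative
  have hsymm : ∀ t : ℝ, fderiv ℝ (fderiv ℝ G) (t, 0) (1, 0) (0, 1)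
      = fderiv ℝ (fderiv ℝ G) (t, 0) (0, 1) (1, 0) :=
    fun t => second_derivative_symmetric hDG (hfdd (t, 0)).hasFDerivAt _ _
  -- mixed partial, s then t direction
  have hmix : ∀ t : ℝ, HasDerivAt (fun s => fderiv ℝ G (t, s) (1, 0))
      (fderiv ℝ (fderiv ℝ G) (t, 0) (0, 1) (1, 0)) 0 := by
    intro t
    have h1 : HasDerivAt (fun s => fderiv ℝ G (t, s))
        (fderiv ℝ (fderiv ℝ G) (t, 0) (0, 1)) 0 :=
      (hfdd (t, 0)).hasFDerivAt.comp_hasDerivAt 0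
        (HasDerivAt.prodMk (hasDerivAt_const 0 t) (hasDerivAt_id 0))
    simpa using h1.clm_apply (hasDerivAt_const 0 ((1 : ℝ), (0 : ℝ)))
  -- derivative of s ↦ S (G (t,s)) at 0
  have hSder : ∀ t : ℝ, HasDerivAt (fun s => S (G (t, s)))
      (((fderiv ℝ G (t, 0) (0, 1)).2, fderiv ℝ σ (G (t, 0)) (fderiv ℝ G (t, 0) (0, 1)))) 0 := by
    intro t
    have hSf : HasFDerivAt S
        ((ContinuousLinearMap.snd ℝ E E).prod (fderiv ℝ σ (G (t, 0)))) (G (t, 0)) :=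
      HasFDerivAt.prodMk hasFDerivAt_snd (hσd (G (t, 0))).hasFDerivAt
    simpa [Function.comp_def] using hSf.comp_hasDerivAt 0 (hps t 0)
  have key : ∀ t : ℝ, fderiv ℝ (fderiv ℝ G) (t, 0) (1, 0) (0, 1)
      = ((fderiv ℝ G (t, 0) (0, 1)).2, fderiv ℝ σ (G (t, 0)) (fderiv ℝ G (t, 0) (0, 1))) := by
    intro t
    rw [hsymm t]
    have h2 := hmix t
    have h3 : (fun s => fderiv ℝ G (t, s) (1, 0)) = fun s => S (G (t, s)) :=
      funext fun s => hflowG t s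
    rw [h3] at h2
    exact h2.unique (hSder t)
  -- derivative of t ↦ fderiv G (t,0) (0,1)
  have hBder : ∀ t : ℝ, HasDerivAt (fun u => fderiv ℝ G (u, 0) (0, 1))
      (((fderiv ℝ G (t, 0) (0, 1)).2, fderiv ℝ σ (G (t, 0)) (fderiv ℝ G (t, 0) (0, 1)))) t := by
    intro t
    have h1 : HasDerivAt (fun u => fderiv ℝ G (u, 0))
        (fderiv ℝ (fderiv ℝ G) (t, 0) (1, 0)) t :=
      (hfdd (t, 0)).hasFDerivAt.comp_hasDerivAt t
        (HasDerivAt.prodMk (hasDerivAt_id t) (hasDerivAt_const t 0))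
    have h2 := h1.clm_apply (hasDerivAt_const t ((0 : ℝ), (1 : ℝ)))
    simp only [add_zero, ContinuousLinearMap.zero_apply, map_zero] at h2
    rw [key t] at h2
    simpa using h2
  have hYf : Y = fun t => (G (t, 0), fderiv ℝ G (t, 0) (0, 1)) := by
    rw [hY]; funext t; rw [hB t]
  -- Part 1
  have part1 : ∀ t, HasDerivAt Y
      (((Y t).1.2, σ (Y t).1),
        ((Y t).2.2, fderiv ℝ σ (Y t).1 ((Y t).2.1, 0)
          + fderiv ℝ σ (Y t).1 (0, (Y t).2.2))) t := by
    intro t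
    rw [hYf]
    have hA : HasDerivAt (fun u => G (u, 0)) ((G (t, 0)).2, σ (G (t, 0))) t := hflow t (X 0)
    have h := HasDerivAt.prodMk hA (hBder t)
    convert h using 2
    rw [← ContinuousLinearMap.map_add]
    norm_num
  refine ⟨part1, ?_, ?_⟩
  · -- Part 2
    have hc1 : (deriv fun u => (Φ (u, X 0)).1) = fun t => (Φ (t, X 0)).2 := by
      funext u
      have h := (ContinuousLinearMap.fst ℝ E E).hasFDerivAt.comp_hasDerivAt u (hflow u (X 0))
      simpa [Function.comp_def] using h.deriv
    intro t
    rw [hc1]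
    have h2 : HasDerivAt (fun u => (Φ (u, X 0)).2) (σ (Φ (t, X 0))) t := by
      have h := (ContinuousLinearMap.snd ℝ E E).hasFDerivAt.comp_hasDerivAt t (hflow t (X 0))
      simpa [Function.comp_def] using h
    rw [h2.deriv]
  · -- Part 3
    intro t
    have hc1 : (deriv fun u => (Φ (u, X 0)).1) = fun u => (Φ (u, X 0)).2 := by
      funext u
      have h := (ContinuousLinearMap.fst ℝ E E).hasFDerivAt.comp_hasDerivAt u (hflow u (X 0))
      simpa [Function.comp_def] using h.deriv
    have hJ : (fun u => deriv (fun s => (Φ (u, X s)).1) 0)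
        = fun u => (fderiv ℝ G (u, 0) (0, 1)).1 := by
      funext u
      have h := (ContinuousLinearMap.fst ℝ E E).hasFDerivAt.comp_hasDerivAt 0 (hps u 0)
      simpa [Function.comp_def] using h.deriv
    have hJder : ∀ u : ℝ, HasDerivAt (fun u => (fderiv ℝ G (u, 0) (0, 1)).1)
        ((fderiv ℝ G (u, 0) (0, 1)).2) u := by
      intro u
      have h := (ContinuousLinearMap.fst ℝ E E).hasFDerivAt.comp_hasDerivAt u (hBder u)
      simpa [Function.comp_def] using h
    have hJ' : deriv (fun u => deriv (fun s => (Φ (u, X s)).1) 0)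
        = fun u => (fderiv ℝ G (u, 0) (0, 1)).2 := by
      funext u
      rw [hJ]
      exact (hJder u).deriv
    have hJt : deriv (fun s => (Φ (t, X s)).1) 0 = ((fderiv ℝ G (t, 0)) (0, 1)).1 := by
      have h := (ContinuousLinearMap.fst ℝ E E).hasFDerivAt.comp_hasDerivAt 0 (hps t 0)
      simpa [Function.comp_def] using h.deriv
    simp only [hJ', hc1, hJt]
    have hJ'' : HasDerivAt (fun u => (fderiv ℝ G (u, 0) (0, 1)).2)
        (fderiv ℝ σ (G (t, 0)) (fderiv ℝ G (t, 0) (0, 1))) t := by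
      have h := (ContinuousLinearMap.snd ℝ E E).hasFDerivAt.comp_hasDerivAt t (hBder t)
      simpa [Function.comp_def] using h
    rw [hJ''.deriv]
    rw [← ContinuousLinearMap.map_add]
    norm_num
    rfl
end

section
/- Let Γ be the Christoffel symbol of a linear connection on the tangent bundle of a real normed vector space E and let σ(x, v) := Γ_x(v, v) be the associated spray function. Let c : ℝ → E be a geodesic, i.e. c'' = σ(c, c'), and let J : ℝ → E be twice differentiable. Then J satisfies the linearized geodesic equation J''(t) = D₁σ(c(t), c'(t))(J(t)) + D₂σ(c(t), c'(t))(J'(t)) (equivalently J'' = (DΓ(c)(J))(c', c') + Γ_c(J', c') + Γ_c(c', J')) if and only if J satisfies the classical Jacobi equation ∇_t ∇_t J + R(J, c')c' + ∇_t Tor(J, c') = 0, where ∇_t Z(t) = Z'(t) − Γ_{c(t)}(Z(t), c'(t)) is the covariant derivative along c, R is the curvature and Tor the torsion of Γ. -/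
/-- For the spray `σ (x,v) = Γ_x(v,v)` of a linear connection `Γ` on the
tangent bundle of `E` and a geodesic `c`, a twice differentiable field `J` along `c`
satisfies the linearized geodesic equation `J'' = D₁σ(c,c') J + D₂σ(c,c') J'` iff it
satisfies the classical Jacobi equation `∇_t∇_t J + R(J,c')c' + ∇_t Tor(J,c') = 0`. -/
theorem stmt_10 {E : Type*} [NormedAddCommGroup E] [NormedSpace ℝ E]
    (Γ : E → E →L[ℝ] E →L[ℝ] E) (hΓ : ContDiff ℝ (⊤ : ℕ∞) Γ)
    (σ : E × E → E) (hσ : σ = fun p => Γ p.1 p.2 p.2)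
    (c : ℝ → E) (hc : Differentiable ℝ c) (hc' : Differentiable ℝ (deriv c))
    (hgeo : ∀ t, deriv (deriv c) t = σ (c t, deriv c t))
    (J : ℝ → E) (hJ : Differentiable ℝ J) (hJ' : Differentiable ℝ (deriv J))
    (covD : (ℝ → E) → (ℝ → E))
    (hcovD : covD = fun Z t => deriv Z t - Γ (c t) (Z t) (deriv c t))
    (R : E → E → E → E → E)
    (hR : R = fun y ξ η v => fderiv ℝ Γ y η v ξ - fderiv ℝ Γ y ξ v η
      + Γ y (Γ y v η) ξ - Γ y (Γ y v ξ) η)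
    (Tor : E → E → E → E)
    (hTor : Tor = fun y ξ η => Γ y ξ η - Γ y η ξ) :
    (∀ t, deriv (deriv J) t
        = fderiv ℝ σ (c t, deriv c t) (J t, 0)
          + fderiv ℝ σ (c t, deriv c t) (0, deriv J t)) ↔
    (∀ t, covD (covD J) t + R (c t) (J t) (deriv c t) (deriv c t)
        + covD (fun u => Tor (c u) (J u) (deriv c u)) t = 0) := by
  have hΓd : ∀ y, HasFDerivAt Γ (fderiv ℝ Γ y) y := fun y =>
    ((hΓ.differentiable (by simp)) y).hasFDerivAt
  subst hσ hcovD hR hTor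
  refine forall_congr' fun t => ?_
  -- abbreviations
  set x := c t with hx
  set v := deriv c t with hv
  -- basic derivative facts at t
  have hct : HasDerivAt c v t := (hc t).hasDerivAt
  have hc't : HasDerivAt (deriv c) (Γ x v v) t := by
    have h := (hc' t).hasDerivAt
    rwa [hgeo t] at h
  have hJt : HasDerivAt J (deriv J t) t := (hJ t).hasDerivAt
  have hJ't : HasDerivAt (deriv J) (deriv (deriv J) t) t := (hJ' t).hasDerivAt
  -- key: derivative of u ↦ Γ (c u) (Z u) (W u)
  have key : ∀ (Z W : ℝ → E) (z' w' : E), HasDerivAt Z z' t → HasDerivAt W w' t →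
      HasDerivAt (fun u => Γ (c u) (Z u) (W u))
        (fderiv ℝ Γ x v (Z t) (W t) + Γ x z' (W t) + Γ x (Z t) w') t := by
    intro Z W z' w' hZ hW
    have h1 : HasDerivAt (fun u => Γ (c u)) (fderiv ℝ Γ x v) t :=
      ((hΓ.differentiable (by simp)) (c t)).hasFDerivAt.comp_hasDerivAt t hct
    have h2 := h1.clm_apply hZ
    have h3 := h2.clm_apply hW
    simpa [ContinuousLinearMap.add_apply, add_assoc] using h3
  -- derivative of covD J
  have hG1 := key J (deriv c) (deriv J t) (Γ x v v) hJt hc't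
  have hZd := hJ't.fun_sub hG1
  -- derivative of the torsion field
  have hT := (key J (deriv c) (deriv J t) (Γ x v v) hJt hc't).fun_sub
    (key (deriv c) J (Γ x v v) (deriv J t) hc't hJt)
  -- compute fderiv of σ at (x, v)
  have hσ1 : HasFDerivAt (fun p : E × E => Γ p.1)
      ((fderiv ℝ Γ x).comp (ContinuousLinearMap.fst ℝ E E)) (x, v) :=
    by have h := ((hΓ.differentiable (by simp)) x).hasFDerivAt.comp (x, v) (hasFDerivAt_fst (𝕜 := ℝ) (p := (x, v))); exact h
  have hσ2 := hσ1.clm_apply (hasFDerivAt_snd (𝕜 := ℝ) (p := (x, v)))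
  have hσ3 := hσ2.clm_apply (hasFDerivAt_snd (𝕜 := ℝ) (p := (x, v)))
  have hσf := hσ3.fderiv
  have hL1 : fderiv ℝ (fun p : E × E => Γ p.1 p.2 p.2) (x, v) (J t, 0)
      = fderiv ℝ Γ x (J t) v v := by
    rw [hσf]; simp
  have hL2 : fderiv ℝ (fun p : E × E => Γ p.1 p.2 p.2) (x, v) (0, deriv J t)
      = Γ x (deriv J t) v + Γ x v (deriv J t) := by
    rw [hσf]; simp; abel
  rw [hL1, hL2]
  -- now compute the Jacobi-side expression
  have hBIG :
      ((fun Z u => deriv Z u - Γ (c u) (Z u) (deriv c u))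
          ((fun Z u => deriv Z u - Γ (c u) (Z u) (deriv c u)) J)) t
        + (fderiv ℝ Γ x v v (J t) - fderiv ℝ Γ x (J t) v v
            + Γ x (Γ x v v) (J t) - Γ x (Γ x v (J t)) v)
        + ((fun Z u => deriv Z u - Γ (c u) (Z u) (deriv c u))
            (fun u => Γ (c u) (J u) (deriv c u) - Γ (c u) (deriv c u) (J u))) t
      = deriv (deriv J) t
        - (fderiv ℝ Γ x (J t) v v + (Γ x (deriv J t) v + Γ x v (deriv J t))) := by
    simp only
    rw [hZd.deriv, hT.deriv]
    simp only [map_sub, map_add, ContinuousLinearMap.sub_apply, ContinuousLinearMap.add_apply]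
    abel
  rw [hBIG, sub_eq_zero]
end

section
/- Let σ : E × E → E be a smooth spray function with spray vector field S(x, v) = (v, σ(x, v)), and let Φ : ℝ × (E × E) → E × E be a smooth global flow of S. Let c : ℝ → E be a geodesic (c'' = σ(c, c')) with c(t) = first component of Φ(t, (c(0), c'(0))), and let J : ℝ → E be any solution of the Jacobi equation J'' = D₁σ(c, c')(J) + D₂σ(c, c')(J'). Then there exists a smooth curve X : ℝ → E × E with X(0) = (c(0), c'(0)) such that J(t) = ∂_s|_{s=0} (first component of Φ(t, X(s))) for all t; i.e. every Jacobi field arises as the derivative of a variation of geodesics. One may take X(s) = (c(0) + s·J(0), c'(0) + s·J'(0)). -/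
open Set

/-- Every Jacobi field along a geodesic `c` of the spray `σ` arises as the
derivative of a variation of geodesics through the flow `Φ`; one may take the variation
of initial conditions `X s = (c 0 + s • J 0, c' 0 + s • J' 0)`. -/
theorem stmt_11 {E : Type*} [NormedAddCommGroup E] [NormedSpace ℝ E]
    (σ : E × E → E) (hσ : ContDiff ℝ (⊤ : ℕ∞) σ)
    (hhom : ∀ (x v : E) (t : ℝ), σ (x, t • v) = t ^ 2 • σ (x, v))
    (Φ : ℝ × (E × E) → E × E) (hΦ : ContDiff ℝ (⊤ : ℕ∞) Φ)
    (hΦ0 : ∀ p, Φ (0, p) = p)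
    (hflow : ∀ (t : ℝ) (p : E × E),
      HasDerivAt (fun τ => Φ (τ, p)) ((Φ (t, p)).2, σ (Φ (t, p))) t)
    (c : ℝ → E) (hc : Differentiable ℝ c) (hc' : Differentiable ℝ (deriv c))
    (hgeo : ∀ t, deriv (deriv c) t = σ (c t, deriv c t))
    (hcΦ : ∀ t, c t = (Φ (t, (c 0, deriv c 0))).1)
    (J : ℝ → E) (hJ : Differentiable ℝ J) (hJ' : Differentiable ℝ (deriv J))
    (hJac : ∀ t, deriv (deriv J) t
        = fderiv ℝ σ (c t, deriv c t) (J t, 0)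
          + fderiv ℝ σ (c t, deriv c t) (0, deriv J t)) :
    ∃ X : ℝ → E × E, ContDiff ℝ (⊤ : ℕ∞) X ∧ X 0 = (c 0, deriv c 0) ∧
      (∀ t, J t = deriv (fun s => (Φ (t, X s)).1) 0) ∧
      X = fun s => (c 0 + s • J 0, deriv c 0 + s • deriv J 0) := by
  classical
  set p0 : E × E := (c 0, deriv c 0) with hp0
  set w : E × E := (J 0, deriv J 0) with hw
  set Sf : E × E → E × E := fun q => (q.2, σ q) with hSfdef
  have hSd : ContDiff ℝ (⊤ : ℕ∞) Sf := contDiff_snd.prodMk hσ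
  have hΦdiff : Differentiable ℝ Φ := hΦ.differentiable (by simp)
  have hσdiff : Differentiable ℝ σ := hσ.differentiable (by simp)
  have hSdiff : Differentiable ℝ Sf := hSd.differentiable (by simp)
  -- derivative of the spray vector field
  have hfderivS : ∀ (q u : E × E), fderiv ℝ Sf q u = (u.2, fderiv ℝ σ q u) := by
    intro q u
    have h1 : HasFDerivAt Sf ((ContinuousLinearMap.snd ℝ E E).prod (fderiv ℝ σ q)) q :=
      (ContinuousLinearMap.snd ℝ E E).hasFDerivAt.prodMk (hσdiff q).hasFDerivAt
    rw [h1.fderiv]; rfl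
  -- the flow line through p0 is (c, c')
  have hc2 : ∀ t, deriv c t = (Φ (t, p0)).2 := by
    intro t
    have h1 : HasDerivAt (fun τ => (Φ (τ, p0)).1) ((Φ (t, p0)).2) t := by
      have h2 := (ContinuousLinearMap.fst ℝ E E).hasFDerivAt.comp_hasDerivAt t (hflow t p0)
      simpa [Function.comp_def] using h2
    have h3 : HasDerivAt c ((Φ (t, p0)).2) t := by
      have hcf : c = fun τ => (Φ (τ, p0)).1 := funext hcΦ
      rw [hcf]; exact h1
    exact h3.deriv
  have hΦc : ∀ t, Φ (t, p0) = (c t, deriv c t) := fun t =>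
    Prod.ext (hcΦ t).symm (hc2 t).symm
  set G := fderiv ℝ Φ with hGdef
  have hGc : ContDiff ℝ (⊤ : ℕ∞) G := hΦ.fderiv_right (by simp)
  have hGd : Differentiable ℝ G := hGc.differentiable (by simp)
  set K : ℝ → E × E := fun t => G (t, p0) (0, w) with hKdef
  set A : ℝ → (E × E) →L[ℝ] (E × E) := fun t => fderiv ℝ Sf (Φ (t, p0)) with hAdef
  -- t-partial of the flow
  have hT : ∀ q : ℝ × (E × E), G q ((1 : ℝ), (0 : E × E)) = Sf (Φ q) := by
    intro q
    have hline : HasDerivAt (fun τ : ℝ => (τ, q.2)) ((1 : ℝ), (0 : E × E)) q.1 :=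
      (hasDerivAt_id q.1).prodMk (hasDerivAt_const q.1 q.2)
    have h1 : HasDerivAt (fun τ => Φ (τ, q.2)) (G q ((1 : ℝ), (0 : E × E))) q.1 :=
      (hΦdiff q).hasFDerivAt.comp_hasDerivAt q.1 hline
    exact h1.unique (hflow q.1 q.2)
  -- initial value of K
  have hK0 : K 0 = w := by
    have hid : HasFDerivAt (fun p : E × E => Φ (0, p))
        (ContinuousLinearMap.id ℝ (E × E)) p0 := by
      have hpe : (fun p : E × E => Φ (0, p)) = id := funext hΦ0
      rw [hpe]; exact hasFDerivAt_id p0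
    have hcomp : HasFDerivAt (fun p : E × E => Φ (0, p))
        ((G ((0 : ℝ), p0)).comp (ContinuousLinearMap.inr ℝ ℝ (E × E))) p0 :=
      (hΦdiff ((0 : ℝ), p0)).hasFDerivAt.comp p0
        (ContinuousLinearMap.inr ℝ ℝ (E × E)).hasFDerivAt
    have h2 := hcomp.unique hid
    have h3 := congrArg (fun (L : (E × E) →L[ℝ] (E × E)) => L w) h2
    simpa using h3
  -- K solves the linearized equation
  have hKderiv : ∀ t, HasDerivAt K (A t (K t)) t := by
    intro t
    set B := fderiv ℝ G (t, p0) with hBdef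
    have hline : HasDerivAt (fun τ : ℝ => (τ, p0)) ((1 : ℝ), (0 : E × E)) t :=
      (hasDerivAt_id t).prodMk (hasDerivAt_const t p0)
    have hg : HasDerivAt (fun τ : ℝ => G (τ, p0)) (B ((1 : ℝ), (0 : E × E))) t :=
      (hGd (t, p0)).hasFDerivAt.comp_hasDerivAt t hline
    have hKd : HasDerivAt K ((B ((1 : ℝ), (0 : E × E))) (((0 : ℝ), w) : ℝ × (E × E))) t := by
      have := (ContinuousLinearMap.apply ℝ (E × E)
        ((((0 : ℝ), w) : ℝ × (E × E)) : ℝ × (E × E))).hasFDerivAt.comp_hasDerivAt t hg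
      simpa [Function.comp_def] using this
    have hsymm : B ((1 : ℝ), (0 : E × E)) (((0 : ℝ), w) : ℝ × (E × E))
        = B (((0 : ℝ), w) : ℝ × (E × E)) ((1 : ℝ), (0 : E × E)) :=
      second_derivative_symmetric (fun y => (hΦdiff y).hasFDerivAt)
        (hGd (t, p0)).hasFDerivAt _ _
    have hTd : HasFDerivAt (fun q : ℝ × (E × E) => G q ((1 : ℝ), (0 : E × E)))
        ((ContinuousLinearMap.apply ℝ (E × E)
          (((1 : ℝ), (0 : E × E)) : ℝ × (E × E))).comp B) (t, p0) :=
      (ContinuousLinearMap.apply ℝ (E × E)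
        (((1 : ℝ), (0 : E × E)) : ℝ × (E × E))).hasFDerivAt.comp _ (hGd _).hasFDerivAt
    have hTd2 : HasFDerivAt (fun q : ℝ × (E × E) => Sf (Φ q))
        ((A t).comp (G (t, p0))) (t, p0) :=
      (hSdiff _).hasFDerivAt.comp _ (hΦdiff _).hasFDerivAt
    have heqfun : (fun q : ℝ × (E × E) => G q ((1 : ℝ), (0 : E × E)))
        = fun q => Sf (Φ q) := funext hT
    have hTd' : HasFDerivAt (fun q : ℝ × (E × E) => G q ((1 : ℝ), (0 : E × E)))
        ((A t).comp (G (t, p0))) (t, p0) := by rw [heqfun]; exact hTd2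
    have h4 := hTd.unique hTd'
    have h5 := congrArg (fun (L : (ℝ × (E × E)) →L[ℝ] (E × E)) => L (((0 : ℝ), w) : ℝ × (E × E))) h4
    simp only [ContinuousLinearMap.comp_apply, ContinuousLinearMap.apply_apply] at h5
    have : (B ((1 : ℝ), (0 : E × E))) (((0 : ℝ), w) : ℝ × (E × E)) = A t (K t) := by
      rw [hsymm]; exact h5
    rw [← this]; exact hKd
  -- Y = (J, J') solves the same equation
  set Y : ℝ → E × E := fun t => (J t, deriv J t) with hYdef
  have hYderiv : ∀ t, HasDerivAt Y (A t (Y t)) t := by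
    intro t
    have h1 : HasDerivAt Y (deriv J t, deriv (deriv J) t) t :=
      ((hJ t).hasDerivAt).prodMk ((hJ' t).hasDerivAt)
    have h2 : A t (Y t) = (deriv J t, deriv (deriv J) t) := by
      rw [hAdef]
      show fderiv ℝ Sf (Φ (t, p0)) (J t, deriv J t) = _
      rw [hfderivS (Φ (t, p0)) (J t, deriv J t), hΦc t]
      refine Prod.ext rfl ?_
      have h5 : ((J t, deriv J t) : E × E)
          = ((J t, 0) : E × E) + ((0, deriv J t) : E × E) := by
        simp [Prod.ext_iff]
      rw [h5, map_add, hJac t]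
    rw [h2]; exact h1
  -- uniqueness of solutions: K = Y
  have hAcont : Continuous A := by
    have h1 : Continuous fun t : ℝ => Φ (t, p0) :=
      hΦ.continuous.comp (continuous_id.prodMk continuous_const)
    exact (hSd.continuous_fderiv (by simp)).comp h1
  have hKY : ∀ t, K t = Y t := by
    intro t₀
    set a : ℝ := -(|t₀| + 1) with hadef
    set b : ℝ := |t₀| + 1 with hbdef
    have hab : a < b := by
      have : (0 : ℝ) < |t₀| + 1 := by positivity
      rw [hadef, hbdef]; linarith
    have h0mem : (0 : ℝ) ∈ Ioo a b := by
      constructor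
      · have h5 : (0 : ℝ) < |t₀| + 1 := by positivity
        rw [hadef]; linarith
      · rw [hbdef]; positivity
    have htmem : t₀ ∈ Icc a b := by
      constructor
      · rw [hadef]; have := neg_abs_le t₀; linarith
      · rw [hbdef]; have := le_abs_self t₀; linarith
    obtain ⟨C, hC⟩ := isCompact_Icc.exists_bound_of_continuousOn
      (s := Icc a b) hAcont.continuousOn
    set K0 : NNReal := ⟨max C 0, le_max_right _ _⟩ with hK0def
    set v : ℝ → (E × E) → (E × E) :=
      fun t y => A ((projIcc a b hab.le t : Icc a b) : ℝ) y with hvdef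
    have hv : ∀ t, LipschitzOnWith K0 (v t) univ := by
      intro t
      apply LipschitzWith.lipschitzOnWith
      have hlip := (A ((projIcc a b hab.le t : Icc a b) : ℝ)).lipschitz
      refine hlip.weaken ?_
      have hmem := (projIcc a b hab.le t).2
      have hb2 : ‖A ((projIcc a b hab.le t : Icc a b) : ℝ)‖ ≤ max C 0 :=
        le_trans (hC _ hmem) (le_max_left C 0)
      rw [← NNReal.coe_le_coe, coe_nnnorm]
      exact hb2
    have hvK : ∀ t ∈ Ioo a b, v t (K t) = A t (K t) := by
      intro t ht
      rw [hvdef]; simp only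
      rw [projIcc_of_mem hab.le (Ioo_subset_Icc_self ht)]
    have hvY : ∀ t ∈ Ioo a b, v t (Y t) = A t (Y t) := by
      intro t ht
      rw [hvdef]; simp only
      rw [projIcc_of_mem hab.le (Ioo_subset_Icc_self ht)]
    have hKcont : ContinuousOn K (Icc a b) :=
      (fun t _ => ((hKderiv t).continuousAt).continuousWithinAt)
    have hYcont : ContinuousOn Y (Icc a b) :=
      (fun t _ => ((hYderiv t).continuousAt).continuousWithinAt)
    have heq0 : K 0 = Y 0 := hK0.trans rfl
    have := ODE_solution_unique_of_mem_Icc (v := v) (s := fun _ => univ) (fun t _ => hv t) h0mem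
      hKcont (fun t ht => by rw [hvK t ht]; exact hKderiv t)
      (fun _ _ => mem_univ _)
      hYcont (fun t ht => by rw [hvY t ht]; exact hYderiv t)
      (fun _ _ => mem_univ _) heq0
    exact this htmem
  -- assemble the answer
  refine ⟨fun s => (c 0 + s • J 0, deriv c 0 + s • deriv J 0), ?_, by simp [hp0], ?_, rfl⟩
  · exact (contDiff_const.add (contDiff_id.smul contDiff_const)).prodMk
      (contDiff_const.add (contDiff_id.smul contDiff_const))
  · intro t
    have hX : HasDerivAt
        (fun s : ℝ => ((c 0 + s • J 0, deriv c 0 + s • deriv J 0) : E × E)) w 0 := by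
      have h1 : HasDerivAt (fun s : ℝ => c 0 + s • J 0) (J 0) 0 := by
        simpa [Pi.add_def] using (hasDerivAt_const (0 : ℝ) (c 0)).add
          ((hasDerivAt_id (0 : ℝ)).smul_const (J 0))
      have h2 : HasDerivAt (fun s : ℝ => deriv c 0 + s • deriv J 0) (deriv J 0) 0 := by
        simpa [Pi.add_def] using (hasDerivAt_const (0 : ℝ) (deriv c 0)).add
          ((hasDerivAt_id (0 : ℝ)).smul_const (deriv J 0))
      exact h1.prodMk h2
    have hline : HasDerivAt
        (fun s : ℝ => ((t, (c 0 + s • J 0, deriv c 0 + s • deriv J 0)) : ℝ × (E × E)))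
        ((0 : ℝ), w) 0 := (hasDerivAt_const 0 t).prodMk hX
    have hΦX : HasDerivAt
        (fun s : ℝ => Φ (t, (c 0 + s • J 0, deriv c 0 + s • deriv J 0))) (K t) 0 := by
      have h3 := HasFDerivAt.comp_hasDerivAt (0 : ℝ)
        ((hΦdiff ((t, (c 0 + (0 : ℝ) • J 0, deriv c 0 + (0 : ℝ) • deriv J 0)) :
          ℝ × (E × E))).hasFDerivAt) hline
      have hgx : ((t, (c 0 + (0 : ℝ) • J 0, deriv c 0 + (0 : ℝ) • deriv J 0)) :
          ℝ × (E × E)) = (t, p0) := by simp [hp0]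
      rw [hgx] at h3
      exact h3
    have hfst : HasDerivAt
        (fun s : ℝ => (Φ (t, (c 0 + s • J 0, deriv c 0 + s • deriv J 0))).1)
        ((K t).1) 0 := by
      have := (ContinuousLinearMap.fst ℝ E E).hasFDerivAt.comp_hasDerivAt 0 hΦX
      simpa [Function.comp_def] using this
    rw [hfst.deriv, hKY t]
end
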